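/- Let c, c' ∈ ℝ³, r, r' > 0, and let k, k' be unit vectors in ℝ³. The squared quadratic Wasserstein distance between the uniform probability distributions on the circle with center c, radius r, and axis k and on the circle with center c', radius r', and axis k' is at most |c − c'|² + r² + r'² − r r' (1 + |k · k'|). -/

import Mathlib

/-!
Couple the two circles by the similarity `x ↦ c' + (r'/r) • L (x - c)`, where `L` is the rotation
about a common normal `u` of `k` and `k'` that carries `k` to `k'` (replacing `k'` by `-k'`, which
does not change the second circle, makes `⟪k, k'⟫ ≥ 0`). Writing `x - c = a • u + b • v` on the
first circle, the quarter turns about its axis preserve the uniform measure, and averaging the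
squared displacement over them cancels the terms linear in `c - c'` and leaves
`‖c - c'‖² + r² + r'² - r r' (⟪u, L u⟫ + ⟪v, L v⟫)`, where this trace equals `1 + ⟪k, k'⟫`.
The bound is nonnegative, so it suffices that the uniform measure has mass at most one; the
length of the circle is never needed.
-/

open MeasureTheory
open scoped RealInnerProductSpace

noncomputable section

abbrev E3 := EuclideanSpace ℝ (Fin 3)

/-- Squared quadratic Wasserstein distance, as infimum over couplings. -/
def W2sq {E : Type*} [NormedAddCommGroup E] {mE : MeasurableSpace E}
    (μ ν : Measure E) : ℝ :=
  sInf {x : ℝ | ∃ π : Measure (E × E),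
    π.map Prod.fst = μ ∧ π.map Prod.snd = ν ∧ x = ∫ p, ‖p.1 - p.2‖ ^ 2 ∂π}

/-- The circle in `ℝ³` with center `c`, radius `r` and axis `k`. -/
def circleSet (c : E3) (r : ℝ) (k : E3) : Set E3 :=
  {x | ‖x - c‖ = r ∧ ⟪x - c, k⟫ = 0}

/-- Uniform (normalized arc-length, i.e. 1-dimensional Hausdorff) probability
distribution on the circle with center `c`, radius `r` and axis `k`. -/
def uniformOnCircle (c : E3) (r : ℝ) (k : E3) : Measure E3 :=
  ((Measure.hausdorffMeasure (d := 1) (circleSet c r k))⁻¹) •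
    (Measure.hausdorffMeasure (d := 1)).restrict (circleSet c r k)

open ProbabilityTheory Set Function
open scoped ENNReal NNReal

section Measures

variable {α β : Type*} [MeasurableSpace α] [MeasurableSpace β]

lemma cond_smul {μ : Measure α} {a : ℝ≥0∞} (ha₀ : a ≠ 0) (ha : a ≠ ∞) (s : Set α) :
    (a • μ)[|s] = μ[|s] := by
  rw [ProbabilityTheory.cond, ProbabilityTheory.cond, Measure.smul_apply, Measure.restrict_smul,
    smul_smul, smul_eq_mul, ENNReal.mul_inv (.inl ha₀) (.inl ha), mul_comm, ← mul_assoc,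
    ENNReal.mul_inv_cancel ha₀ ha, one_mul]

lemma map_cond_preimage (μ : Measure α) {f : α → β} (hf : Measurable f) {t : Set β}
    (ht : MeasurableSet t) : (μ[|f ⁻¹' t]).map f = (μ.map f)[|t] := by
  ext B hB
  rw [Measure.map_apply hf hB, cond_apply (hf ht), cond_apply ht, Measure.map_apply hf ht,
    Measure.map_apply hf (ht.inter hB), preimage_inter]

lemma integral_eq_measureReal_univ_mul_of_sum_iterate {μ : Measure α} {R : α → α}
    (hR : MeasurePreserving R μ μ) {φ : α → ℝ} (hφ : Integrable φ μ) {n : ℕ} (hn : n ≠ 0)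
    {K : ℝ} (hsum : ∀ᵐ x ∂μ, ∑ i ∈ Finset.range n, φ (R^[i] x) = n * K) :
    ∫ x, φ x ∂μ = μ.real univ * K := by
  have hint : ∀ i, Integrable (fun x => φ (R^[i] x)) μ := fun i =>
    (hR.iterate i).integrable_comp_of_integrable hφ
  have hinv : ∀ i, ∫ x, φ (R^[i] x) ∂μ = ∫ x, φ x ∂μ := fun i => by
    rw [← integral_map (hR.iterate i).measurable.aemeasurable
      (by rw [(hR.iterate i).map_eq]; exact hφ.aestronglyMeasurable), (hR.iterate i).map_eq]
  have key : n * ∫ x, φ x ∂μ = n * (μ.real univ * K) := calc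
    n * ∫ x, φ x ∂μ = ∫ x, ∑ i ∈ Finset.range n, φ (R^[i] x) ∂μ := by
      rw [integral_finsetSum _ fun i _ => hint i]; simp [hinv]
    _ = n * (μ.real univ * K) := by
      rw [integral_congr_ae hsum, integral_const, smul_eq_mul]; ring
  exact mul_left_cancel₀ (Nat.cast_ne_zero.2 hn) key

lemma Continuous.integrable_of_ae_mem_compact [TopologicalSpace α] [OpensMeasurableSpace α]
    [T2Space α] {μ : Measure α} [IsFiniteMeasure μ] {s : Set α} (hs : IsCompact s)
    (hμ : ∀ᵐ x ∂μ, x ∈ s) {φ : α → ℝ} (hφ : Continuous φ) : Integrable φ μ := by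
  have := hφ.continuousOn.integrableOn_compact (μ := μ) hs
  rwa [IntegrableOn, Measure.restrict_eq_self_of_ae_mem hμ] at this

variable {E : Type*} [NormedAddCommGroup E] [MeasurableSpace E] [OpensMeasurableSpace E]
  [SecondCountableTopology E]

lemma W2sq_map_le (μ : Measure E) {f : E → E} (hf : Measurable f) :
    W2sq μ (μ.map f) ≤ ∫ x, ‖x - f x‖ ^ 2 ∂μ := by
  have hg : Measurable fun x => (x, f x) := measurable_id.prodMk hf
  refine csInf_le ⟨0, ?_⟩ ⟨μ.map fun x => (x, f x), ?_, ?_, ?_⟩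
  · rintro _ ⟨π, -, -, rfl⟩
    exact integral_nonneg fun p => by positivity
  · rw [Measure.map_map measurable_fst hg]; exact Measure.map_id
  · rw [Measure.map_map measurable_snd hg]; rfl
  · rw [integral_map hg.aemeasurable
      (by fun_prop : Continuous fun p : E × E => ‖p.1 - p.2‖ ^ 2).aestronglyMeasurable]

end Measures

section Similarity

variable {E : Type*} [NormedAddCommGroup E] [NormedSpace ℝ E]

def similarity (c c' : E) (ρ : ℝ) (L : E ≃ₗᵢ[ℝ] E) (x : E) : E := c' + ρ • L (x - c)

@[fun_prop]
lemma continuous_similarity (c c' : E) (ρ : ℝ) (L : E ≃ₗᵢ[ℝ] E) :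
    Continuous (similarity c c' ρ L) := by
  unfold similarity; fun_prop

lemma sub_similarity (c c' : E) (ρ : ℝ) (L : E ≃ₗᵢ[ℝ] E) (x : E) :
    x - similarity c c' ρ L x = (c - c') + ((x - c) - ρ • L (x - c)) := by
  unfold similarity; abel

lemma iterate_similarity_one (c : E) (Q : E ≃ₗᵢ[ℝ] E) (n : ℕ) (x : E) :
    (similarity c c 1 Q)^[n] x = c + (⇑Q)^[n] (x - c) := by
  have hconj : Semiconj (c + ·) Q (similarity c c 1 Q) := fun w => by
    simp [similarity]
  simpa using (hconj.iterate_right n (x - c)).symm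

variable [MeasurableSpace E] [BorelSpace E]

lemma map_similarity_hausdorffMeasure (c c' : E) {ρ : ℝ} (hρ : ρ ≠ 0) (L : E ≃ₗᵢ[ℝ] E)
    {d : ℝ} (hd : 0 ≤ d) :
    (μH[d]).map (similarity c c' ρ L) = ‖ρ‖₊⁻¹ ^ d • μH[d] := by
  let e : E ≃ᵢ E :=
    ((IsometryEquiv.subRight c).trans L.toIsometryEquiv).trans (IsometryEquiv.addLeft c')
  have he : similarity c c' ρ L = AffineMap.homothety c' ρ ∘ e := by
    ext x; simp [similarity, e, AffineMap.homothety_apply, add_comm]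
  rw [he, ← Measure.map_map (AffineMap.homothety_continuous c' ρ).measurable
    e.continuous.measurable, e.map_hausdorffMeasure, map_homothety_hausdorffMeasure hd c' hρ]

lemma map_cond_similarity (c c' : E) {ρ : ℝ} (hρ : ρ ≠ 0) (L : E ≃ₗᵢ[ℝ] E)
    {d : ℝ} (hd : 0 ≤ d) {s t : Set E} (ht : MeasurableSet t)
    (hst : similarity c c' ρ L ⁻¹' t = s) :
    (μH[d][|s]).map (similarity c c' ρ L) = μH[d][|t] := by
  have hscale : ((‖ρ‖₊⁻¹ ^ d : ℝ≥0) : ℝ≥0∞) ≠ 0 := by simp [hρ]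
  rw [← hst, map_cond_preimage _ (continuous_similarity c c' ρ L).measurable ht,
    map_similarity_hausdorffMeasure c c' hρ L hd, ENNReal.smul_def,
    cond_smul hscale ENNReal.coe_ne_top]

end Similarity

section InnerProduct

variable {F : Type*} [NormedAddCommGroup F] [InnerProductSpace ℝ F]

lemma norm_smul_add_smul_sq {u v : F} (hu : ‖u‖ = 1) (hv : ‖v‖ = 1) (huv : ⟪u, v⟫ = 0)
    (a b : ℝ) : ‖a • u + b • v‖ ^ 2 = a ^ 2 + b ^ 2 := by
  rw [norm_add_sq_real, norm_smul, norm_smul, real_inner_smul_left, real_inner_smul_right, huv,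
    hu, hv, Real.norm_eq_abs, Real.norm_eq_abs]
  simp [sq_abs]

lemma norm_sub_smul_map_sq (L : F →ₗᵢ[ℝ] F) (ρ : ℝ) (y : F) :
    ‖y - ρ • L y‖ ^ 2 = (1 + ρ ^ 2) * ‖y‖ ^ 2 - 2 * ρ * ⟪y, L y⟫ := by
  rw [norm_sub_sq_real, norm_smul, L.norm_map, real_inner_smul_right, Real.norm_eq_abs,
    mul_pow, sq_abs]
  ring

lemma inner_map_add_inner_map_rotate (L : F →ₗ[ℝ] F) (u v : F) (a b : ℝ) :
    ⟪a • u + b • v, L (a • u + b • v)⟫ + ⟪a • v - b • u, L (a • v - b • u)⟫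
      = (a ^ 2 + b ^ 2) * (⟪u, L u⟫ + ⟪v, L v⟫) := by
  simp only [map_add, map_sub, map_smul, inner_add_left, inner_add_right, inner_sub_left,
    inner_sub_right, real_inner_smul_left, real_inner_smul_right]
  ring

lemma sum_range_four_norm_sq_quarterTurn (Δ : F) {u v : F} (hu : ‖u‖ = 1) (hv : ‖v‖ = 1)
    (huv : ⟪u, v⟫ = 0) {Q : F →ₗ[ℝ] F} (hQu : Q u = v) (hQv : Q v = -u) (L : F →ₗᵢ[ℝ] F)
    (ρ a b : ℝ) :
    ∑ i ∈ Finset.range 4,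
        ‖Δ + ((⇑Q)^[i] (a • u + b • v) - ρ • L ((⇑Q)^[i] (a • u + b • v)))‖ ^ 2
      = 4 * (‖Δ‖ ^ 2 + (a ^ 2 + b ^ 2) * (1 + ρ ^ 2 - ρ * (⟪u, L u⟫ + ⟪v, L v⟫))) := by
  set w := a • u + b • v
  set w' := a • v - b • u
  have hQw : Q w = w' := by simp only [w, w', map_add, map_smul, hQu, hQv]; module
  have hQw' : Q w' = -w := by simp only [w, w', map_sub, map_smul, hQu, hQv]; module
  have hneg (y : F) : Δ + (-y - ρ • -L y) = Δ - (y - ρ • L y) := by module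
  have hw : ‖w‖ ^ 2 = a ^ 2 + b ^ 2 := norm_smul_add_smul_sq hu hv huv a b
  have hw' : ‖a • v - b • u‖ ^ 2 = a ^ 2 + b ^ 2 := by
    rw [sub_eq_add_neg, ← neg_smul, norm_smul_add_smul_sq hv hu (by rwa [real_inner_comm]),
      neg_sq, add_comm]
  have htrace : ⟪w, L w⟫ + ⟪w', L w'⟫ = (a ^ 2 + b ^ 2) * (⟪u, L u⟫ + ⟪v, L v⟫) :=
    inner_map_add_inner_map_rotate L.toLinearMap u v a b
  simp only [Finset.sum_range_succ, Finset.sum_range_zero, zero_add, iterate_succ_apply',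
    iterate_zero_apply, hQw, hQw', map_neg, hneg]
  linear_combination parallelogram_law_with_norm ℝ Δ (w - ρ • L w)
    + parallelogram_law_with_norm ℝ Δ (w' - ρ • L w') + 2 * norm_sub_smul_map_sq L ρ w
    + 2 * norm_sub_smul_map_sq L ρ w' + 2 * (1 + ρ ^ 2) * (hw + hw') - 4 * ρ * htrace

end InnerProduct

section Frame

variable {F : Type*} [NormedAddCommGroup F] [InnerProductSpace ℝ F]

lemma orthonormal_vecThree_iff {u v w : F} :
    Orthonormal ℝ ![u, v, w] ↔
      (‖u‖ = 1 ∧ ‖v‖ = 1 ∧ ‖w‖ = 1) ∧ ⟪u, v⟫ = 0 ∧ ⟪u, w⟫ = 0 ∧ ⟪v, w⟫ = 0 := by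
  constructor
  · intro h
    exact ⟨⟨h.1 0, h.1 1, h.1 2⟩, h.2 (by decide : (0 : Fin 3) ≠ 1),
      h.2 (by decide : (0 : Fin 3) ≠ 2), h.2 (by decide : (1 : Fin 3) ≠ 2)⟩
  · rintro ⟨⟨hu, hv, hw⟩, huv, huw, hvw⟩
    refine ⟨fun i => by fin_cases i <;> assumption, fun i j hij => ?_⟩
    fin_cases i <;> fin_cases j <;> simp_all [real_inner_comm]

lemma Orthonormal.exists_orthonormalBasis_eq {ι : Type*} [Fintype ι] [Nonempty ι] {v : ι → F}
    (hv : Orthonormal ℝ v) (hcard : Fintype.card ι = Module.finrank ℝ F) :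
    ∃ b : OrthonormalBasis ι ℝ F, ⇑b = v :=
  ⟨(basisOfOrthonormalOfCardEqFinrank hv hcard).toOrthonormalBasis
      (by rwa [coe_basisOfOrthonormalOfCardEqFinrank]),
    by simp [coe_basisOfOrthonormalOfCardEqFinrank]⟩

lemma exists_norm_eq_one_inner_eq_zero (hF : 2 < Module.finrank ℝ F) (a b : F) :
    ∃ u : F, ‖u‖ = 1 ∧ ⟪a, u⟫ = 0 ∧ ⟪b, u⟫ = 0 := by
  classical
  have : FiniteDimensional ℝ F := Module.finite_of_finrank_pos (by omega)
  set W := Submodule.span ℝ ({a, b} : Set F)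
  have hW : Module.finrank ℝ W ≤ 2 := by
    refine (finrank_span_le_card ({a, b} : Set F)).trans ?_
    rw [Set.toFinset_insert, Set.toFinset_singleton]
    exact Finset.card_le_two
  have hWperp : Wᗮ ≠ ⊥ := by
    intro h
    have := W.finrank_add_finrank_orthogonal
    rw [h, finrank_bot] at this
    omega
  obtain ⟨x, hxW, hx0⟩ := Submodule.exists_mem_ne_zero_of_ne_bot hWperp
  have horth (y : F) (hy : y ∈ ({a, b} : Set F)) : ⟪y, x⟫ = 0 :=
    (Submodule.mem_orthogonal _ _).1 hxW y (Submodule.subset_span hy)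
  refine ⟨‖x‖⁻¹ • x, norm_smul_inv_norm hx0, ?_, ?_⟩ <;>
    rw [real_inner_smul_right, horth _ (by simp), mul_zero]

lemma eq_inner_smul_add_of_orthonormal (hF : Module.finrank ℝ F = 3) {u v w : F}
    (h : Orthonormal ℝ ![u, v, w]) (x : F) :
    x = ⟪u, x⟫ • u + ⟪v, x⟫ • v + ⟪w, x⟫ • w := by
  obtain ⟨b, hb⟩ := h.exists_orthonormalBasis_eq (by simp [hF])
  have := b.sum_repr x
  simp only [Fin.sum_univ_three, b.repr_apply_apply, hb] at this
  simpa using this.symm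

lemma exists_linearIsometryEquiv_apply_eq (hF : Module.finrank ℝ F = 3) {u v w u' v' w' : F}
    (h : Orthonormal ℝ ![u, v, w]) (h' : Orthonormal ℝ ![u', v', w']) :
    ∃ L : F ≃ₗᵢ[ℝ] F, L u = u' ∧ L v = v' ∧ L w = w' := by
  obtain ⟨b, hb⟩ := h.exists_orthonormalBasis_eq (by simp [hF])
  obtain ⟨b', hb'⟩ := h'.exists_orthonormalBasis_eq (by simp [hF])
  refine ⟨b.equiv b' (Equiv.refl _), ?_, ?_, ?_⟩ <;>
  [have := b.equiv_apply_basis b' (Equiv.refl _) 0;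
   have := b.equiv_apply_basis b' (Equiv.refl _) 1;
   have := b.equiv_apply_basis b' (Equiv.refl _) 2] <;>
  simpa [hb, hb'] using this

lemma exists_frame_linearIsometryEquiv (hF : Module.finrank ℝ F = 3) {k k' : F} (hk : ‖k‖ = 1)
    (hk' : ‖k'‖ = 1) :
    ∃ u v : F, Orthonormal ℝ ![k, u, v] ∧ ∃ L : F ≃ₗᵢ[ℝ] F,
      L k = k' ∧ ⟪u, L u⟫ + ⟪v, L v⟫ = 1 + ⟪k, k'⟫ := by
  obtain ⟨u, hu, hku, hk'u⟩ := exists_norm_eq_one_inner_eq_zero (by omega) k k'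
  obtain ⟨v, hv, hkv, huv⟩ := exists_norm_eq_one_inner_eq_zero (by omega) k u
  have hB : Orthonormal ℝ ![k, u, v] := orthonormal_vecThree_iff.2 ⟨⟨hk, hu, hv⟩, hku, hkv, huv⟩
  set κ := ⟪k, k'⟫
  set β := ⟪v, k'⟫
  have hk'_eq : k' = κ • k + β • v := by
    have := eq_inner_smul_add_of_orthonormal hF hB k'
    rwa [real_inner_comm k' u, hk'u, zero_smul, add_zero] at this
  have hκβ : κ ^ 2 + β ^ 2 = 1 := by
    rw [← norm_smul_add_smul_sq hk hv hkv, ← hk'_eq, hk', one_pow]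
  -- `L` is the rotation about `u` carrying `k` to `k' = κ • k + β • v`.
  have hz : ‖κ • v - β • k‖ = 1 := by
    have := norm_smul_add_smul_sq hv hk (by rwa [real_inner_comm]) κ (-β)
    rwa [neg_smul, ← sub_eq_add_neg, neg_sq, hκβ, pow_eq_one_iff_of_nonneg
      (norm_nonneg _) two_ne_zero] at this
  have hkk : ⟪k, k⟫ = 1 := by rw [real_inner_self_eq_norm_sq, hk, one_pow]
  have hvv : ⟪v, v⟫ = 1 := by rw [real_inner_self_eq_norm_sq, hv, one_pow]
  have hB' : Orthonormal ℝ ![k', u, κ • v - β • k] := by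
    refine orthonormal_vecThree_iff.2 ⟨⟨hk', hu, hz⟩, hk'u, ?_, ?_⟩
    · rw [hk'_eq]
      simp only [inner_add_left, inner_sub_right, real_inner_smul_left, real_inner_smul_right,
        hkk, hvv, hkv, real_inner_comm k v]
      ring
    · simp [inner_sub_right, real_inner_smul_right, huv, real_inner_comm k u, hku]
  obtain ⟨L, hLk, hLu, hLv⟩ := exists_linearIsometryEquiv_apply_eq hF hB hB'
  refine ⟨u, v, hB, L, hLk, ?_⟩
  rw [hLu, hLv, real_inner_self_eq_norm_sq, hu, inner_sub_right, real_inner_smul_right,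
    real_inner_smul_right, hvv, real_inner_comm k v, hkv]
  ring

lemma exists_quarterTurn (hF : Module.finrank ℝ F = 3) {k u v : F}
    (h : Orthonormal ℝ ![k, u, v]) :
    ∃ Q : F ≃ₗᵢ[ℝ] F, Q k = k ∧ Q u = v ∧ Q v = -u := by
  obtain ⟨⟨hk, hu, hv⟩, hku, hkv, huv⟩ := orthonormal_vecThree_iff.1 h
  refine exists_linearIsometryEquiv_apply_eq hF h (orthonormal_vecThree_iff.2 ?_)
  refine ⟨⟨hk, hv, by rwa [norm_neg]⟩, hkv, ?_, ?_⟩ <;>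
    simp [inner_neg_right, hku, real_inner_comm u v, huv]

end Frame

section Circle

lemma circleSet_neg (c : E3) (r : ℝ) (k : E3) : circleSet c r (-k) = circleSet c r k := by
  simp [circleSet, inner_neg_right]

lemma uniformOnCircle_neg (c : E3) (r : ℝ) (k : E3) :
    uniformOnCircle c r (-k) = uniformOnCircle c r k := by
  simp only [uniformOnCircle, circleSet_neg]

lemma uniformOnCircle_eq_cond (c : E3) (r : ℝ) (k : E3) :
    uniformOnCircle c r k = μH[1][|circleSet c r k] := rfl

lemma isClosed_circleSet (c : E3) (r : ℝ) (k : E3) : IsClosed (circleSet c r k) :=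
  (isClosed_eq (by fun_prop) continuous_const).inter (isClosed_eq (by fun_prop) continuous_const)

lemma isCompact_circleSet (c : E3) (r : ℝ) (k : E3) : IsCompact (circleSet c r k) :=
  (isCompact_sphere c r).of_isClosed_subset (isClosed_circleSet c r k) fun _ hx =>
    mem_sphere_iff_norm.2 hx.1

lemma preimage_similarity_circleSet (c c' : E3) {ρ : ℝ} (hρ : 0 < ρ) {L : E3 ≃ₗᵢ[ℝ] E3}
    {k k' : E3} (hL : L k = k') (r : ℝ) :
    similarity c c' ρ L ⁻¹' circleSet c' (ρ * r) k' = circleSet c r k := by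
  ext x
  simp only [circleSet, mem_preimage, mem_ofPred_eq, similarity, add_sub_cancel_left, norm_smul,
    L.norm_map, Real.norm_of_nonneg hρ.le, real_inner_smul_left, ← hL, L.inner_map_map,
    mul_right_inj' hρ.ne', mul_eq_zero, hρ.ne', false_or]

lemma map_similarity_uniformOnCircle (c c' : E3) {ρ : ℝ} (hρ : 0 < ρ) {L : E3 ≃ₗᵢ[ℝ] E3}
    {k k' : E3} (hL : L k = k') (r : ℝ) :
    (uniformOnCircle c r k).map (similarity c c' ρ L) = uniformOnCircle c' (ρ * r) k' :=
  map_cond_similarity c c' hρ.ne' L zero_le_one (isClosed_circleSet _ _ _).measurableSet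
    (preimage_similarity_circleSet c c' hρ hL r)

lemma sum_range_four_norm_sub_similarity_sq {c c' : E3} {r : ℝ} {k u v : E3}
    (hB : Orthonormal ℝ ![k, u, v]) {Q : E3 ≃ₗᵢ[ℝ] E3} (hQu : Q u = v) (hQv : Q v = -u)
    (ρ : ℝ) (L : E3 ≃ₗᵢ[ℝ] E3) {x : E3} (hx : x ∈ circleSet c r k) :
    ∑ i ∈ Finset.range 4, ‖(similarity c c 1 Q)^[i] x
        - similarity c c' ρ L ((similarity c c 1 Q)^[i] x)‖ ^ 2
      = 4 * (‖c - c'‖ ^ 2 + r ^ 2 * (1 + ρ ^ 2 - ρ * (⟪u, L u⟫ + ⟪v, L v⟫))) := by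
  obtain ⟨⟨-, hu, hv⟩, -, -, huv⟩ := orthonormal_vecThree_iff.1 hB
  obtain ⟨a, b, hab⟩ : ∃ a b : ℝ, x - c = a • u + b • v := by
    have := eq_inner_smul_add_of_orthonormal (by simp) hB (x - c)
    rw [real_inner_comm, hx.2, zero_smul, zero_add] at this
    exact ⟨_, _, this⟩
  have hr : r ^ 2 = a ^ 2 + b ^ 2 := by rw [← hx.1, hab, norm_smul_add_smul_sq hu hv huv]
  simp only [iterate_similarity_one, sub_similarity, add_sub_cancel_left]
  rw [hab, hr]
  exact sum_range_four_norm_sq_quarterTurn (c - c') hu hv huv (Q := Q.toLinearEquiv.toLinearMap)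
    hQu hQv L.toLinearIsometry ρ _ _

end Circle

instance (c : E3) (r : ℝ) (k : E3) : IsZeroOrProbabilityMeasure (uniformOnCircle c r k) := by
  rw [uniformOnCircle_eq_cond]; infer_instance

theorem w2sq_uniformOnCircle_le_inner (c c' : E3) {r r' : ℝ} (hr : 0 < r) (hr' : 0 < r')
    {k k' : E3} (hk : ‖k‖ = 1) (hk' : ‖k'‖ = 1) :
    W2sq (uniformOnCircle c r k) (uniformOnCircle c' r' k') ≤
      ‖c - c'‖ ^ 2 + r ^ 2 + r' ^ 2 - r * r' * (1 + ⟪k, k'⟫) := by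
  obtain ⟨u, v, hB, L, hLk, htrace⟩ := exists_frame_linearIsometryEquiv (by simp) hk hk'
  obtain ⟨Q, hQk, hQu, hQv⟩ := exists_quarterTurn (by simp) hB
  set μ := uniformOnCircle c r k
  set f := similarity c c' (r' / r) L
  have hf : μ.map f = uniformOnCircle c' r' k' := by
    rw [map_similarity_uniformOnCircle c c' (div_pos hr' hr) hLk, div_mul_cancel₀ _ hr.ne']
  have hR : MeasurePreserving (similarity c c 1 Q) μ μ :=
    ⟨(continuous_similarity c c 1 Q).measurable, by
      simpa using map_similarity_uniformOnCircle c c one_pos hQk r⟩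
  have hμ : ∀ᵐ x ∂μ, x ∈ circleSet c r k := ae_cond_mem (isClosed_circleSet c r k).measurableSet
  have hcost : ∫ x, ‖x - f x‖ ^ 2 ∂μ
      = μ.real univ * (‖c - c'‖ ^ 2 + r ^ 2 + r' ^ 2 - r * r' * (1 + ⟪k, k'⟫)) := by
    refine integral_eq_measureReal_univ_mul_of_sum_iterate hR
      ((by fun_prop : Continuous _).integrable_of_ae_mem_compact (isCompact_circleSet c r k) hμ)
      four_ne_zero (hμ.mono fun x hx => ?_)
    rw [sum_range_four_norm_sub_similarity_sq hB hQu hQv _ L hx, htrace]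
    field_simp
    ring
  have hκ : ⟪k, k'⟫ ≤ 1 := by simpa [hk, hk'] using real_inner_le_norm k k'
  have hbound : 0 ≤ ‖c - c'‖ ^ 2 + r ^ 2 + r' ^ 2 - r * r' * (1 + ⟪k, k'⟫) := by
    nlinarith [sq_nonneg (r - r'), mul_nonneg (mul_pos hr hr').le (sub_nonneg.2 hκ)]
  rw [← hf]
  calc W2sq μ (μ.map f) ≤ ∫ x, ‖x - f x‖ ^ 2 ∂μ :=
        W2sq_map_le μ (continuous_similarity _ _ _ _).measurable
    _ = _ := hcost
    _ ≤ _ := mul_le_of_le_one_left hbound measureReal_le_one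

theorem w2sq_uniformOnCircle_le (c c' : E3) (r r' : ℝ) (hr : 0 < r) (hr' : 0 < r')
    (k k' : E3) (hk : ‖k‖ = 1) (hk' : ‖k'‖ = 1) :
    W2sq (uniformOnCircle c r k) (uniformOnCircle c' r' k') ≤
      ‖c - c'‖ ^ 2 + r ^ 2 + r' ^ 2 - r * r' * (1 + |⟪k, k'⟫|) := by
  rcases le_total 0 ⟪k, k'⟫ with hκ | hκ
  · rw [abs_of_nonneg hκ]
    exact w2sq_uniformOnCircle_le_inner c c' hr hr' hk hk'
  · have := w2sq_uniformOnCircle_le_inner c c' hr hr' hk (k' := -k') (by rwa [norm_neg])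
    rwa [uniformOnCircle_neg, inner_neg_right, ← abs_of_nonpos hκ] at this

end
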